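/- Let a > 1 and λ > 0. Then the log-Poisson moment relations hold: for every k ∈ ℕ₀, ∑_{j=0}^∞ a^{kj} (λ^j e^{-λ}/j!) · ((-1)^j e^λ j! a^{-j(j-1)/2} / (λ^j (1/a;1/a)_j)) = 0, i.e. the perturbation h̃_j = (-1)^j e^λ j! a^{-j(j-1)/2}/(λ^j (1/a;1/a)_j) annihilates all moments of Y = a^X for X Poisson(λ). -/

import Mathlib

/-!
Write `q = a⁻¹`. After cancelling the Poisson weights the `j`-th term is `c_j (a^k)^j` with
`c_j = (-1)^j q^(j choose 2) / (q;q)_j`, the coefficients of Euler's expansion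
`E(t) = ∑ c_j t^j = ∏_{i ≥ 0} (1 - t q^i)`. Instead of the product formula we only need the
functional equation `E(t) = (1 - t) E(q t)`, which follows from the recurrence
`c_{j+1} (1 - q^(j+1)) = -q^j c_j`. It gives `E(1) = 0`, and read as
`E(q⁻¹ t) = (1 - q⁻¹ t) E(t)` it propagates this zero to every `t = q^(-k) = a^k`.
-/

open Filter Finset

variable {𝕜 : Type*} [NormedField 𝕜]

noncomputable def qPochhammer (q : 𝕜) (j : ℕ) : 𝕜 := ∏ s ∈ range j, (1 - q ^ (s + 1))

noncomputable def eulerCoeff (q : 𝕜) (j : ℕ) : 𝕜 := (-1) ^ j * q ^ j.choose 2 / qPochhammer q j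

noncomputable def eulerSeries (q t : 𝕜) : 𝕜 := ∑' j, eulerCoeff q j * t ^ j

lemma one_sub_norm_le_norm_one_sub_pow {q : 𝕜} (hq : ‖q‖ < 1) (n : ℕ) :
    1 - ‖q‖ ≤ ‖1 - q ^ (n + 1)‖ :=
  calc 1 - ‖q‖ ≤ 1 - ‖q‖ ^ (n + 1) := by
        gcongr; exact pow_le_of_le_one (norm_nonneg q) hq.le n.succ_ne_zero
    _ = ‖(1 : 𝕜)‖ - ‖q ^ (n + 1)‖ := by rw [norm_one, norm_pow]
    _ ≤ ‖1 - q ^ (n + 1)‖ := norm_sub_norm_le _ _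

lemma one_sub_pow_succ_ne_zero {q : 𝕜} (hq : ‖q‖ < 1) (n : ℕ) : 1 - q ^ (n + 1) ≠ 0 :=
  norm_pos_iff.1 <| (sub_pos.2 hq).trans_le (one_sub_norm_le_norm_one_sub_pow hq n)

lemma qPochhammer_ne_zero {q : 𝕜} (hq : ‖q‖ < 1) (j : ℕ) : qPochhammer q j ≠ 0 :=
  prod_ne_zero_iff.2 fun s _ => one_sub_pow_succ_ne_zero hq s

lemma eulerCoeff_succ_mul {q : 𝕜} (hq : ‖q‖ < 1) (j : ℕ) :
    eulerCoeff q (j + 1) * (1 - q ^ (j + 1)) = -(q ^ j * eulerCoeff q j) := by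
  have hP := qPochhammer_ne_zero hq j
  have hs := one_sub_pow_succ_ne_zero hq j
  simp only [eulerCoeff, qPochhammer, prod_range_succ, Nat.choose_succ_succ', Nat.choose_one_right]
  rw [← qPochhammer]
  field_simp
  ring

lemma norm_eulerCoeff_succ_mul_le {q : 𝕜} (hq : ‖q‖ < 1) (t : 𝕜) (j : ℕ) :
    ‖eulerCoeff q (j + 1) * t ^ (j + 1)‖ * (1 - ‖q‖) ≤
      ‖q‖ ^ j * ‖t‖ * ‖eulerCoeff q j * t ^ j‖ := by
  calc ‖eulerCoeff q (j + 1) * t ^ (j + 1)‖ * (1 - ‖q‖)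
      ≤ ‖eulerCoeff q (j + 1) * t ^ (j + 1)‖ * ‖1 - q ^ (j + 1)‖ := by
        gcongr; exact one_sub_norm_le_norm_one_sub_pow hq j
    _ = ‖q‖ ^ j * ‖t‖ * ‖eulerCoeff q j * t ^ j‖ := by
        rw [← norm_mul, mul_right_comm, eulerCoeff_succ_mul hq]
        simp only [norm_neg, norm_mul, norm_pow]
        ring

lemma summable_eulerCoeff_mul_pow [CompleteSpace 𝕜] {q : 𝕜} (hq : ‖q‖ < 1) (t : 𝕜) :
    Summable fun j => eulerCoeff q j * t ^ j := by
  have hδ : 0 < 1 - ‖q‖ := sub_pos.2 hq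
  refine summable_of_ratio_norm_eventually_le (r := 1 / 2) (by norm_num) ?_
  have hsmall : ∀ᶠ j : ℕ in atTop, ‖q‖ ^ j * ‖t‖ < (1 - ‖q‖) / 2 := by
    refine Tendsto.eventually_lt_const (half_pos hδ) ?_
    simpa using (tendsto_pow_atTop_nhds_zero_of_lt_one (norm_nonneg q) hq).mul_const ‖t‖
  filter_upwards [hsmall] with j hj
  rw [← mul_le_mul_iff_left₀ hδ]
  calc ‖eulerCoeff q (j + 1) * t ^ (j + 1)‖ * (1 - ‖q‖)
      ≤ ‖q‖ ^ j * ‖t‖ * ‖eulerCoeff q j * t ^ j‖ := norm_eulerCoeff_succ_mul_le hq t j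
    _ ≤ (1 - ‖q‖) / 2 * ‖eulerCoeff q j * t ^ j‖ := by gcongr
    _ = 1 / 2 * ‖eulerCoeff q j * t ^ j‖ * (1 - ‖q‖) := by ring

lemma eulerSeries_eq_one_sub_mul [CompleteSpace 𝕜] {q : 𝕜} (hq : ‖q‖ < 1) (t : 𝕜) :
    eulerSeries q t = (1 - t) * eulerSeries q (q * t) := by
  have hS := summable_eulerCoeff_mul_pow hq t
  have hS' := summable_eulerCoeff_mul_pow hq (q * t)
  have hdiff : eulerSeries q t - eulerSeries q (q * t) = -t * eulerSeries q (q * t) := by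
    rw [eulerSeries, eulerSeries, ← hS.tsum_sub hS', (hS.sub hS').tsum_eq_zero_add]
    simp only [pow_zero, mul_one, sub_self, zero_add, ← tsum_mul_left]
    refine tsum_congr fun j => ?_
    linear_combination t ^ (j + 1) * eulerCoeff_succ_mul hq j
  linear_combination hdiff

lemma eulerSeries_inv_pow_eq_zero [CompleteSpace 𝕜] {q : 𝕜} (hq : ‖q‖ < 1) (hq₀ : q ≠ 0)
    (k : ℕ) : eulerSeries q (q⁻¹ ^ k) = 0 := by
  induction k with
  | zero => rw [eulerSeries_eq_one_sub_mul hq, pow_zero, sub_self, zero_mul]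
  | succ k ih => rw [eulerSeries_eq_one_sub_mul hq, pow_succ', mul_inv_cancel_left₀ hq₀, ih, mul_zero]

/-- Log-Poisson moment relations: for `a > 1`, `λ > 0` and every `k ∈ ℕ₀`, the
perturbation `h̃_j = (-1)^j e^λ j! a^{-j(j-1)/2}/(λ^j (1/a;1/a)_j)` annihilates all
moments of `Y = a^X`, `X ~ Poisson(λ)`. -/
theorem log_poisson_moments (a lam : ℝ) (ha : 1 < a) (hlam : 0 < lam) (k : ℕ) :
    (∑' j : ℕ,
      a ^ (k * j) * (lam ^ j * Real.exp (-lam) / (j.factorial : ℝ)) *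
        ((-1 : ℝ) ^ j * Real.exp lam * (j.factorial : ℝ) * (a ^ (j * (j - 1) / 2))⁻¹ /
          (lam ^ j * ∏ s ∈ Finset.range j, (1 - (a⁻¹) ^ (s + 1))))) = 0 := by
  have hq : ‖a⁻¹‖ < 1 := by
    rw [norm_inv, Real.norm_of_nonneg (by linarith)]
    exact inv_lt_one_of_one_lt₀ ha
  have hterm : ∀ j : ℕ,
      a ^ (k * j) * (lam ^ j * Real.exp (-lam) / (j.factorial : ℝ)) *
        ((-1 : ℝ) ^ j * Real.exp lam * (j.factorial : ℝ) * (a ^ (j * (j - 1) / 2))⁻¹ /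
          (lam ^ j * ∏ s ∈ Finset.range j, (1 - (a⁻¹) ^ (s + 1))))
        = eulerCoeff a⁻¹ j * (a⁻¹⁻¹ ^ k) ^ j := by
    intro j
    have hP := qPochhammer_ne_zero hq j
    have hlam' : lam ^ j ≠ 0 := pow_ne_zero j hlam.ne'
    rw [eulerCoeff, qPochhammer, ← Nat.choose_two_right, inv_inv, ← pow_mul, mul_comm k j,
      inv_pow, Real.exp_neg]
    field_simp
  rw [tsum_congr hterm]
  exact eulerSeries_inv_pow_eq_zero hq (inv_ne_zero (by linarith)) k
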